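/- arXiv:2507.12737 — 2 statements merged into one kernel-verified Lean document; each statement's English description precedes it below -/
import Mathlib

section
/- If G is a simple graph with maximum degree at most 2, then G admits a total 4-coloring. -/
set_option linter.unnecessarySeqFocus false
set_option synthInstance.maxSize 5000
set_option synthInstance.maxHeartbeats 1000000
set_option maxHeartbeats 1000000

/-- A total `k`-coloring of a simple graph `G`: vertices and edges are colored
with colors in `Fin k` so that adjacent vertices get distinct colors, distinct
edges sharing an endpoint get distinct colors, and every vertex gets a color
distinct from those of its incident edges. -/
def IsTotalColoring {V : Type*} (G : SimpleGraph V) (k : ℕ)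
    (fv : V → Fin k) (fe : Sym2 V → Fin k) : Prop :=
  (∀ x y, G.Adj x y → fv x ≠ fv y) ∧
  (∀ e₁ e₂, e₁ ∈ G.edgeSet → e₂ ∈ G.edgeSet → e₁ ≠ e₂ →
    (∃ w, w ∈ e₁ ∧ w ∈ e₂) → fe e₁ ≠ fe e₂) ∧
  (∀ x e, e ∈ G.edgeSet → x ∈ e → fv x ≠ fe e)

lemma key1 : ∀ c1 d1 : Fin 4, ∃ a p : Fin 4, a ≠ c1 ∧ p ≠ a ∧ p ≠ c1 ∧ p ≠ d1 := by decide

lemma fin4_succ_ne : ∀ c : Fin 4, c + 1 ≠ c := by decide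

lemma edge_repr {W : Type*} (H : SimpleGraph W) (w : W) (e : Sym2 W)
    (he : e ∈ H.edgeSet) (hw : w ∈ e) : ∃ z, H.Adj w z ∧ e = s(w, z) := by
  revert he hw
  induction e using Sym2.ind with
  | _ a b =>
    intro he hw
    rw [SimpleGraph.mem_edgeSet] at he
    rcases Sym2.mem_iff.mp hw with h | h
    · subst h; exact ⟨b, he, rfl⟩
    · subst h; exact ⟨a, he.symm, Sym2.eq_swap⟩

lemma edge_unique {W : Type*} (H : SimpleGraph W) (w : W)
    (huniq : ∀ z₁ z₂, H.Adj w z₁ → H.Adj w z₂ → z₁ = z₂) :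
    ∀ e₁ ∈ H.edgeSet, ∀ e₂ ∈ H.edgeSet, w ∈ e₁ → w ∈ e₂ → e₁ = e₂ := by
  intro e₁ h₁ e₂ h₂ hw₁ hw₂
  obtain ⟨z₁, hz₁, rfl⟩ := edge_repr H w e₁ h₁ hw₁
  obtain ⟨z₂, hz₂, rfl⟩ := edge_repr H w e₂ h₂ hw₂
  rw [huniq z₁ z₂ hz₁ hz₂]

lemma nbr_unique {W : Type*} [Fintype W] (H : SimpleGraph W) [DecidableRel H.Adj]
    (w : W) (h : H.degree w ≤ 1) :
    ∀ z₁ z₂, H.Adj w z₁ → H.Adj w z₂ → z₁ = z₂ := by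
  intro z₁ z₂ h₁ h₂
  exact Finset.card_le_one.mp h z₁ ((H.mem_neighborFinset w z₁).mpr h₁)
    z₂ ((H.mem_neighborFinset w z₂).mpr h₂)

lemma edges_at_unique_color {W : Type*} (H : SimpleGraph W) (fv' : W → Fin 4)
    (fe' : Sym2 W → Fin 4)
    (h3 : ∀ x e, e ∈ H.edgeSet → x ∈ e → fv' x ≠ fe' e)
    (w : W) (huniq : ∀ z₁ z₂, H.Adj w z₁ → H.Adj w z₂ → z₁ = z₂) :
    ∃ d, d ≠ fv' w ∧ ∀ e ∈ H.edgeSet, w ∈ e → fe' e = d := by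
  by_cases hE : ∃ z, H.Adj w z
  · obtain ⟨z, hz⟩ := hE
    have hes : s(w, z) ∈ H.edgeSet := H.mem_edgeSet.mpr hz
    refine ⟨fe' s(w, z), (h3 w _ hes (Sym2.mem_mk_left w z)).symm, fun e he hwe => ?_⟩
    exact congrArg fe' (edge_unique H w huniq e he _ hes hwe (Sym2.mem_mk_left w z))
  · refine ⟨fv' w + 1, fin4_succ_ne _, fun e he hwe => ?_⟩
    obtain ⟨z, hz, _⟩ := edge_repr H w e he hwe
    exact absurd ⟨z, hz⟩ hE

lemma comap_degree_le {W : Type*} [Fintype W] (H : SimpleGraph W) [DecidableRel H.Adj]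
    {P : W → Prop} [DecidablePred P]
    [DecidableRel (H.comap (Subtype.val : {x // P x} → W)).Adj]
    (w : {x // P x}) :
    (H.comap (Subtype.val : {x // P x} → W)).degree w ≤ H.degree w.1 := by
  apply Finset.card_le_card_of_injOn Subtype.val
  · intro z hz
    simp only [Finset.mem_coe, SimpleGraph.mem_neighborFinset, SimpleGraph.comap_adj] at *
    exact hz
  · exact fun _ _ _ _ h => Subtype.val_injective h

lemma comap_degree_le_sub {W : Type*} [Fintype W] [DecidableEq W] (H : SimpleGraph W)
    [DecidableRel H.Adj] {P : W → Prop} [DecidablePred P]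
    [DecidableRel (H.comap (Subtype.val : {x // P x} → W)).Adj]
    (w : {x // P x}) (t : W) (ht : ¬ P t) (hadj : H.Adj w.1 t) :
    (H.comap (Subtype.val : {x // P x} → W)).degree w ≤ H.degree w.1 - 1 := by
  have h1 : (H.comap (Subtype.val : {x // P x} → W)).degree w
      ≤ ((H.neighborFinset w.1).erase t).card := by
    apply Finset.card_le_card_of_injOn Subtype.val
    · intro z hz
      simp only [Finset.mem_coe, SimpleGraph.mem_neighborFinset, SimpleGraph.comap_adj] at hz ⊢
      rw [Finset.mem_erase, SimpleGraph.mem_neighborFinset]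
      exact ⟨fun h => ht (h ▸ z.2), hz⟩
    · exact fun _ _ _ _ h => Subtype.val_injective h
  rwa [Finset.card_erase_of_mem ((H.mem_neighborFinset w.1 t).mpr hadj)] at h1

lemma empty_case {V : Type*} [IsEmpty V] (G : SimpleGraph V) :
    ∃ (fv : V → Fin 4) (fe : Sym2 V → Fin 4),
      (∀ x y, G.Adj x y → fv x ≠ fv y) ∧
      (∀ e₁ e₂, e₁ ∈ G.edgeSet → e₂ ∈ G.edgeSet → e₁ ≠ e₂ →
        (∃ w, w ∈ e₁ ∧ w ∈ e₂) → fe e₁ ≠ fe e₂) ∧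
      (∀ x e, e ∈ G.edgeSet → x ∈ e → fv x ≠ fe e) := by
  refine ⟨fun w => isEmptyElim w, fun _ => 0, fun x => isEmptyElim x, ?_, fun x => isEmptyElim x⟩
  rintro e₁ e₂ _ _ _ ⟨w, _⟩
  exact isEmptyElim w


lemma key2 : ∀ c1 c2 d1 d2 : Fin 4, d1 ≠ c1 → d2 ≠ c2 →
    ∃ a b p q r : Fin 4,
      a ≠ c1 ∧ a ≠ c2 ∧ b ≠ c1 ∧ b ≠ c2 ∧ a ≠ b ∧
      p ≠ a ∧ p ≠ c1 ∧ p ≠ d1 ∧ p ≠ r ∧ p ≠ q ∧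
      q ≠ b ∧ q ≠ c2 ∧ q ≠ d2 ∧ q ≠ r ∧
      r ≠ a ∧ r ≠ b := by decide

universe u
theorem aux (n : ℕ) : ∀ (V : Type u) [Fintype V] (G : SimpleGraph V)
    [DecidableRel G.Adj], Fintype.card V ≤ n → (∀ w, G.degree w ≤ 2) →
    ∃ (fv : V → Fin 4) (fe : Sym2 V → Fin 4),
      (∀ x y, G.Adj x y → fv x ≠ fv y) ∧
      (∀ e₁ e₂, e₁ ∈ G.edgeSet → e₂ ∈ G.edgeSet → e₁ ≠ e₂ →
        (∃ w, w ∈ e₁ ∧ w ∈ e₂) → fe e₁ ≠ fe e₂) ∧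
      (∀ x e, e ∈ G.edgeSet → x ∈ e → fv x ≠ fe e) := by
  induction n with
  | zero =>
    intro V _ G _ hcard _
    haveI : IsEmpty V := Fintype.card_eq_zero_iff.mp (Nat.le_zero.mp hcard)
    exact empty_case G
  | succ n ih =>
    intro V _ G _ hcard hdeg
    classical
    rcases isEmpty_or_nonempty V with hV | hV
    · exact empty_case G
    by_cases hsmall : ∃ v, G.degree v ≤ 1
    · -- CASE 1
      obtain ⟨v, hv⟩ := hsmall
      set V' := {w : V // w ≠ v} with hV'
      set G' := G.comap (Subtype.val : V' → V) with hG'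
      haveI : DecidableRel G'.Adj := fun a b => Classical.dec _
      have hcard' : Fintype.card V' ≤ n := by
        have hlt : Fintype.card V' < Fintype.card V :=
          Fintype.card_subtype_lt (x := v) (by simp)
        omega
      have hdeg' : ∀ w : V', G'.degree w ≤ 2 := fun w =>
        le_trans (comap_degree_le G w) (hdeg w.1)
      obtain ⟨fv', fe', hc1', hc2', hc3'⟩ := ih V' G' hcard' hdeg'
      have hvu : ∀ z₁ z₂, G.Adj v z₁ → G.Adj v z₂ → z₁ = z₂ := nbr_unique G v hv
      -- master choice of colors
      have hmaster : ∃ a p : Fin 4, p ≠ a ∧ ∀ z (hz : G.Adj v z),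
          a ≠ fv' ⟨z, (G.ne_of_adj hz).symm⟩ ∧ p ≠ fv' ⟨z, (G.ne_of_adj hz).symm⟩ ∧
          ∀ e ∈ G'.edgeSet, (⟨z, (G.ne_of_adj hz).symm⟩ : V') ∈ e → p ≠ fe' e := by
        by_cases hN : ∃ z, G.Adj v z
        · obtain ⟨x, hx⟩ := hN
          have hxv : x ≠ v := (G.ne_of_adj hx).symm
          have hdx : G'.degree ⟨x, hxv⟩ ≤ 1 := by
            have h1 : G'.degree ⟨x, hxv⟩ ≤ G.degree x - 1 :=
              comap_degree_le_sub G (P := fun w => w ≠ v) ⟨x, hxv⟩ v (by simp) hx.symm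
            have h2 := hdeg x
            omega
          obtain ⟨d1, _, hd1⟩ := edges_at_unique_color G' fv' fe' hc3' ⟨x, hxv⟩
            (nbr_unique G' _ hdx)
          obtain ⟨a, p, ha, hpa, hpc, hpd⟩ := key1 (fv' ⟨x, hxv⟩) d1
          refine ⟨a, p, hpa, fun z hz => ?_⟩
          have hzx : z = x := hvu z x hz hx
          subst hzx
          exact ⟨ha, hpc, fun e he hme => by rw [hd1 e he hme]; exact hpd⟩
        · obtain ⟨a, p, _, hpa, _, _⟩ := key1 0 0
          exact ⟨a, p, hpa, fun z hz => absurd ⟨z, hz⟩ hN⟩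
      obtain ⟨a, p, hpa, hnbr⟩ := hmaster
      -- the new colorings
      have hsym : ∀ w z : V,
          (if hw : w = v then p else if hz : z = v then p else fe' s(⟨w, hw⟩, ⟨z, hz⟩))
          = (if hw : z = v then p else if hz : w = v then p else fe' s(⟨z, hw⟩, ⟨w, hz⟩)) := by
        intro w z
        by_cases hw : w = v <;> by_cases hz : z = v <;> simp [hw, hz]
        exact congrArg fe' Sym2.eq_swap
      set fv : V → Fin 4 := fun w => if h : w = v then a else fv' ⟨w, h⟩ with hfv
      set fe : Sym2 V → Fin 4 := Sym2.lift ⟨fun w z =>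
        if hw : w = v then p else if hz : z = v then p else fe' s(⟨w, hw⟩, ⟨z, hz⟩),
        hsym⟩ with hfe
      have hfv_v : fv v = a := by simp [hfv]
      have hfv_o : ∀ w : V', fv w.1 = fv' w := fun w => by simp [hfv, w.2]
      have feq1 : ∀ z, fe s(v, z) = p := fun z => by simp [hfe]
      have feq2 : ∀ w z : V', fe s(w.1, z.1) = fe' s(w, z) := fun w z => by
        simp [hfe, w.2, z.2]
      -- edge classification
      have hclass : ∀ e ∈ G.edgeSet, (∃ z, G.Adj v z ∧ e = s(v, z)) ∨
          (∃ w z : V', G'.Adj w z ∧ e = s(w.1, z.1)) := by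
        intro e he
        by_cases hve : v ∈ e
        · exact Or.inl (edge_repr G v e he hve)
        · right
          revert he hve
          induction e using Sym2.ind with
          | _ a b =>
            intro he hve
            rw [Sym2.mem_iff] at hve
            push_neg at hve
            exact ⟨⟨a, fun h => hve.1 h.symm⟩, ⟨b, fun h => hve.2 h.symm⟩,
              G.mem_edgeSet.mp he, rfl⟩
      have hlift_mem : ∀ (w z t : V'), t.1 ∈ s(w.1, z.1) → t ∈ s(w, z) := by
        intro w z t ht
        rcases Sym2.mem_iff.mp ht with h | h
        · rw [Sym2.mem_iff]; left; exact Subtype.ext h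
        · rw [Sym2.mem_iff]; right; exact Subtype.ext h
      refine ⟨fv, fe, ?_, ?_, ?_⟩
      · -- condition 1
        intro w z hadj
        by_cases hw : w = v
        · subst hw
          rw [hfv_v, hfv_o ⟨z, (G.ne_of_adj hadj).symm⟩]
          exact (hnbr z hadj).1
        · by_cases hz : z = v
          · subst hz
            rw [hfv_v, hfv_o ⟨w, (G.ne_of_adj hadj.symm).symm⟩]
            exact ((hnbr w hadj.symm).1).symm
          · rw [hfv_o ⟨w, hw⟩, hfv_o ⟨z, hz⟩]
            exact hc1' ⟨w, hw⟩ ⟨z, hz⟩ hadj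
      · -- condition 2
        intro e₁ e₂ he₁ he₂ hne ⟨t, ht₁, ht₂⟩
        rcases hclass e₁ he₁ with ⟨z₁, hz₁, rfl⟩ | ⟨w₁, z₁, hwz₁, rfl⟩ <;>
          rcases hclass e₂ he₂ with ⟨z₂, hz₂, rfl⟩ | ⟨w₂, z₂, hwz₂, rfl⟩
        · exact absurd (by rw [hvu z₁ z₂ hz₁ hz₂]) hne
        · rw [feq1, feq2]
          have htz : t = z₁ := by
            rcases Sym2.mem_iff.mp ht₁ with h | h
            · exfalso
              rcases Sym2.mem_iff.mp ht₂ with h2 | h2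
              · exact w₂.2 (h2.symm.trans h)
              · exact z₂.2 (h2.symm.trans h)
            · exact h
          subst htz
          have htne : t ≠ v := (G.ne_of_adj hz₁).symm
          exact (hnbr t hz₁).2.2 s(w₂, z₂) (G'.mem_edgeSet.mpr hwz₂)
            (hlift_mem w₂ z₂ ⟨t, htne⟩ ht₂)
        · rw [feq1, feq2]
          have htz : t = z₂ := by
            rcases Sym2.mem_iff.mp ht₂ with h | h
            · exfalso
              rcases Sym2.mem_iff.mp ht₁ with h2 | h2
              · exact w₁.2 (h2.symm.trans h)
              · exact z₁.2 (h2.symm.trans h)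
            · exact h
          subst htz
          have htne : t ≠ v := (G.ne_of_adj hz₂).symm
          exact ((hnbr t hz₂).2.2 s(w₁, z₁) (G'.mem_edgeSet.mpr hwz₁)
            (hlift_mem w₁ z₁ ⟨t, htne⟩ ht₁)).symm
        · rw [feq2, feq2]
          refine hc2' s(w₁, z₁) s(w₂, z₂) (G'.mem_edgeSet.mpr hwz₁)
            (G'.mem_edgeSet.mpr hwz₂) (fun h => hne ?_) ?_
          · have := congrArg (Sym2.map (Subtype.val : V' → V)) h
            rwa [Sym2.map_pair_eq, Sym2.map_pair_eq] at this
          · have htne : t ≠ v := by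
              rcases Sym2.mem_iff.mp ht₁ with h | h
              · rw [h]; exact w₁.2
              · rw [h]; exact z₁.2
            exact ⟨⟨t, htne⟩, hlift_mem w₁ z₁ ⟨t, htne⟩ ht₁,
              hlift_mem w₂ z₂ ⟨t, htne⟩ ht₂⟩
      · -- condition 3
        intro t e he hte
        rcases hclass e he with ⟨z, hz, rfl⟩ | ⟨w, z, hwz, rfl⟩
        · rw [feq1]
          rcases Sym2.mem_iff.mp hte with h | h
          · subst h; rw [hfv_v]; exact hpa.symm
          · subst h
            rw [hfv_o ⟨t, (G.ne_of_adj hz).symm⟩]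
            exact ((hnbr t hz).2.1).symm
        · rw [feq2]
          have htne : t ≠ v := by
            rcases Sym2.mem_iff.mp hte with h | h
            · rw [h]; exact w.2
            · rw [h]; exact z.2
          rw [hfv_o ⟨t, htne⟩]
          exact hc3' ⟨t, htne⟩ s(w, z) (G'.mem_edgeSet.mpr hwz)
            (hlift_mem w z ⟨t, htne⟩ hte)
    · -- CASE 2
      have hdeg2 : ∀ w, G.degree w = 2 := by
        intro w
        have h1 := hdeg w
        have h2 : ¬ G.degree w ≤ 1 := fun h => hsmall ⟨w, h⟩
        omega
      obtain ⟨v⟩ := hV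
      obtain ⟨u, hu⟩ := (G.degree_pos_iff_exists_adj v).mp (by rw [hdeg2 v]; norm_num)
      have huv : u ≠ v := (G.ne_of_adj hu).symm
      have hex : ∃ x, x ≠ v ∧ G.Adj u x := by
        have hNcard : (G.neighborFinset u).card = 2 := hdeg2 u
        have h1 : 0 < ((G.neighborFinset u).erase v).card := by
          rw [Finset.card_erase_of_mem ((G.mem_neighborFinset u v).mpr hu.symm)]
          omega
        obtain ⟨x, hx'⟩ := Finset.card_pos.mp h1
        rw [Finset.mem_erase, G.mem_neighborFinset] at hx'
        exact ⟨x, hx'.1, hx'.2⟩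
      obtain ⟨x, hxv, hx⟩ := hex
      have hxu : x ≠ u := (G.ne_of_adj hx).symm
      have hey : ∃ y, y ≠ u ∧ G.Adj v y := by
        have hNcard : (G.neighborFinset v).card = 2 := hdeg2 v
        have h1 : 0 < ((G.neighborFinset v).erase u).card := by
          rw [Finset.card_erase_of_mem ((G.mem_neighborFinset v u).mpr hu)]
          omega
        obtain ⟨y, hy'⟩ := Finset.card_pos.mp h1
        rw [Finset.mem_erase, G.mem_neighborFinset] at hy'
        exact ⟨y, hy'.1, hy'.2⟩
      obtain ⟨y, hyu, hy⟩ := hey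
      have hyv : y ≠ v := (G.ne_of_adj hy).symm
      have hNu : G.neighborFinset u = {v, x} := by
        refine (Finset.eq_of_subset_of_card_le ?_ ?_).symm
        · intro z hz
          rcases Finset.mem_insert.mp hz with rfl | hz'
          · exact (G.mem_neighborFinset u z).mpr hu.symm
          · rw [Finset.mem_singleton] at hz'
            subst hz'
            exact (G.mem_neighborFinset u z).mpr hx
        · rw [Finset.card_pair (Ne.symm hxv)]
          exact hdeg u
      have hNv : G.neighborFinset v = {u, y} := by
        refine (Finset.eq_of_subset_of_card_le ?_ ?_).symm
        · intro z hz
          rcases Finset.mem_insert.mp hz with rfl | hz'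
          · exact (G.mem_neighborFinset v z).mpr hu
          · rw [Finset.mem_singleton] at hz'
            subst hz'
            exact (G.mem_neighborFinset v z).mpr hy
        · rw [Finset.card_pair (Ne.symm hyu)]
          exact hdeg v
      have Uu : ∀ z, G.Adj u z → z = v ∨ z = x := by
        intro z hz
        have hm := (G.mem_neighborFinset u z).mpr hz
        rw [hNu] at hm
        simpa using hm
      have Uv : ∀ z, G.Adj v z → z = u ∨ z = y := by
        intro z hz
        have hm := (G.mem_neighborFinset v z).mpr hz
        rw [hNv] at hm
        simpa using hm
      set V'' := {w : V // w ≠ u ∧ w ≠ v} with hV''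
      set G' := G.comap (Subtype.val : V'' → V) with hG'
      haveI : DecidableRel G'.Adj := fun a' b' => Classical.dec _
      have hcard' : Fintype.card V'' ≤ n := by
        have hlt : Fintype.card V'' < Fintype.card V :=
          Fintype.card_subtype_lt (x := u) (by simp)
        omega
      have hdeg' : ∀ w : V'', G'.degree w ≤ 2 := fun w =>
        le_trans (comap_degree_le G w) (hdeg w.1)
      obtain ⟨fv', fe', hc1', hc2', hc3'⟩ := ih V'' G' hcard' hdeg'
      set x'' : V'' := ⟨x, hxu, hxv⟩ with hx''
      set y'' : V'' := ⟨y, hyu, hyv⟩ with hy''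
      have hdx : G'.degree x'' ≤ 1 := by
        have h1 : G'.degree x'' ≤ G.degree x - 1 :=
          comap_degree_le_sub G (P := fun w => w ≠ u ∧ w ≠ v) x'' u (by simp) hx.symm
        have h2 := hdeg x
        omega
      have hdy : G'.degree y'' ≤ 1 := by
        have h1 : G'.degree y'' ≤ G.degree y - 1 :=
          comap_degree_le_sub G (P := fun w => w ≠ u ∧ w ≠ v) y'' v (by simp) hy.symm
        have h2 := hdeg y
        omega
      obtain ⟨d1, hd1ne, hd1⟩ := edges_at_unique_color G' fv' fe' hc3' x'' (nbr_unique G' x'' hdx)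
      obtain ⟨d2, hd2ne, hd2⟩ := edges_at_unique_color G' fv' fe' hc3' y'' (nbr_unique G' y'' hdy)
      obtain ⟨a, b, p, q, r, ha1, ha2, hb1, hb2, hab, hpa, hpc1, hpd1, hpr, hpq,
        hqb, hqc2, hqd2, hqr, hra, hrb⟩ := key2 (fv' x'') (fv' y'') d1 d2 hd1ne hd2ne
      have hsym : ∀ w z : V,
          (if hw : w = u then (if z = v then r else p)
           else if hw2 : w = v then (if z = u then r else q)
           else if hz : z = u then p
           else if hz2 : z = v then q
           else fe' s(⟨w, hw, hw2⟩, ⟨z, hz, hz2⟩))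
          = (if hw : z = u then (if w = v then r else p)
           else if hw2 : z = v then (if w = u then r else q)
           else if hz : w = u then p
           else if hz2 : w = v then q
           else fe' s(⟨z, hw, hw2⟩, ⟨w, hz, hz2⟩)) := by
        intro w z
        by_cases h1 : w = u <;> by_cases h2 : w = v <;>
          by_cases h3 : z = u <;> by_cases h4 : z = v <;>
          simp [h1, h2, h3, h4, huv, Ne.symm huv] <;>
          exact congrArg fe' Sym2.eq_swap
      set fv : V → Fin 4 := fun w =>
        if h1 : w = u then a else if h2 : w = v then b else fv' ⟨w, h1, h2⟩ with hfv
      set fe : Sym2 V → Fin 4 := Sym2.lift ⟨fun w z =>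
        if hw : w = u then (if z = v then r else p)
        else if hw2 : w = v then (if z = u then r else q)
        else if hz : z = u then p
        else if hz2 : z = v then q
        else fe' s(⟨w, hw, hw2⟩, ⟨z, hz, hz2⟩), hsym⟩ with hfe
      have hfv_u : fv u = a := by simp [hfv]
      have hfv_v : fv v = b := by simp [hfv, Ne.symm huv]
      have hfv_o : ∀ w : V'', fv w.1 = fv' w := fun w => by simp [hfv, w.2.1, w.2.2]
      have feq_uv : fe s(u, v) = r := by simp [hfe]
      have feq_ux : ∀ z, z ≠ v → fe s(u, z) = p := fun z hz => by simp [hfe, hz]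
      have feq_vy : ∀ z, z ≠ u → fe s(v, z) = q := fun z hz => by
        simp [hfe, hz, Ne.symm huv]
      have feq_lift : ∀ w z : V'', fe s(w.1, z.1) = fe' s(w, z) := fun w z => by
        simp [hfe, w.2.1, w.2.2, z.2.1, z.2.2]
      have hclass : ∀ e ∈ G.edgeSet, e = s(u, v) ∨ e = s(u, x) ∨ e = s(v, y) ∨
          ∃ w z : V'', G'.Adj w z ∧ e = s(w.1, z.1) := by
        intro e he
        by_cases hue : u ∈ e
        · obtain ⟨z, hz, rfl⟩ := edge_repr G u e he hue
          rcases Uu z hz with rfl | rfl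
          · exact Or.inl rfl
          · exact Or.inr (Or.inl rfl)
        by_cases hve : v ∈ e
        · obtain ⟨z, hz, rfl⟩ := edge_repr G v e he hve
          rcases Uv z hz with rfl | rfl
          · exact Or.inl Sym2.eq_swap
          · exact Or.inr (Or.inr (Or.inl rfl))
        · refine Or.inr (Or.inr (Or.inr ?_))
          revert he hue hve
          induction e using Sym2.ind with
          | _ a' b' =>
            intro he hue hve
            rw [Sym2.mem_iff] at hue hve
            push_neg at hue hve
            exact ⟨⟨a', fun h => hue.1 h.symm, fun h => hve.1 h.symm⟩,
              ⟨b', fun h => hue.2 h.symm, fun h => hve.2 h.symm⟩,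
              G.mem_edgeSet.mp he, rfl⟩
      have hlift_mem : ∀ (w z t : V''), t.1 ∈ s(w.1, z.1) → t ∈ s(w, z) := by
        intro w z t ht
        rcases Sym2.mem_iff.mp ht with h | h
        · rw [Sym2.mem_iff]; left; exact Subtype.ext h
        · rw [Sym2.mem_iff]; right; exact Subtype.ext h
      have hnotuv : ∀ (t : V) (w z : V''), t ∈ s(w.1, z.1) → t ≠ u ∧ t ≠ v := by
        intro t w z ht
        rcases Sym2.mem_iff.mp ht with h | h
        · rw [h]; exact ⟨w.2.1, w.2.2⟩
        · rw [h]; exact ⟨z.2.1, z.2.2⟩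
      refine ⟨fv, fe, ?_, ?_, ?_⟩
      · -- condition 1
        intro w z hadj
        by_cases hw1 : w = u
        · subst hw1
          rcases Uu z hadj with rfl | rfl
          · rw [hfv_u, hfv_v]; exact hab
          · rw [hfv_u, hfv_o x'']; exact ha1
        by_cases hw2 : w = v
        · subst hw2
          rcases Uv z hadj with rfl | rfl
          · rw [hfv_v, hfv_u]; exact hab.symm
          · rw [hfv_v, hfv_o y'']; exact hb2
        by_cases hz1 : z = u
        · subst hz1
          rcases Uu w hadj.symm with rfl | rfl
          · exact absurd rfl hw2
          · rw [hfv_o x'', hfv_u]; exact ha1.symm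
        by_cases hz2 : z = v
        · subst hz2
          rcases Uv w hadj.symm with rfl | rfl
          · exact absurd rfl hw1
          · rw [hfv_o y'', hfv_v]; exact hb2.symm
        · rw [hfv_o ⟨w, hw1, hw2⟩, hfv_o ⟨z, hz1, hz2⟩]
          exact hc1' ⟨w, hw1, hw2⟩ ⟨z, hz1, hz2⟩ hadj
      · -- condition 2
        intro e₁ e₂ he₁ he₂ hne ht
        obtain ⟨t, ht₁, ht₂⟩ := ht
        rcases hclass e₁ he₁ with rfl | rfl | rfl | ⟨w₁, z₁, hwz₁, rfl⟩ <;>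
          rcases hclass e₂ he₂ with rfl | rfl | rfl | ⟨w₂, z₂, hwz₂, rfl⟩
        · exact absurd rfl hne
        · rw [feq_uv, feq_ux x hxv]; exact hpr.symm
        · rw [feq_uv, feq_vy y hyu]; exact hqr.symm
        · exfalso
          rcases Sym2.mem_iff.mp ht₁ with h | h
          · exact (hnotuv t w₂ z₂ ht₂).1 h
          · exact (hnotuv t w₂ z₂ ht₂).2 h
        · rw [feq_ux x hxv, feq_uv]; exact hpr
        · exact absurd rfl hne
        · rw [feq_ux x hxv, feq_vy y hyu]; exact hpq
        · rcases Sym2.mem_iff.mp ht₁ with h | h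
          · exact absurd h (hnotuv t w₂ z₂ ht₂).1
          · rw [h] at ht₂
            rw [feq_ux x hxv, feq_lift w₂ z₂,
              hd1 s(w₂, z₂) (G'.mem_edgeSet.mpr hwz₂) (hlift_mem w₂ z₂ x'' ht₂)]
            exact hpd1
        · rw [feq_vy y hyu, feq_uv]; exact hqr
        · rw [feq_vy y hyu, feq_ux x hxv]; exact hpq.symm
        · exact absurd rfl hne
        · rcases Sym2.mem_iff.mp ht₁ with h | h
          · exact absurd h (hnotuv t w₂ z₂ ht₂).2
          · rw [h] at ht₂
            rw [feq_vy y hyu, feq_lift w₂ z₂,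
              hd2 s(w₂, z₂) (G'.mem_edgeSet.mpr hwz₂) (hlift_mem w₂ z₂ y'' ht₂)]
            exact hqd2
        · exfalso
          rcases Sym2.mem_iff.mp ht₂ with h | h
          · exact (hnotuv t w₁ z₁ ht₁).1 h
          · exact (hnotuv t w₁ z₁ ht₁).2 h
        · rcases Sym2.mem_iff.mp ht₂ with h | h
          · exact absurd h (hnotuv t w₁ z₁ ht₁).1
          · rw [h] at ht₁
            rw [feq_ux x hxv, feq_lift w₁ z₁,
              hd1 s(w₁, z₁) (G'.mem_edgeSet.mpr hwz₁) (hlift_mem w₁ z₁ x'' ht₁)]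
            exact hpd1.symm
        · rcases Sym2.mem_iff.mp ht₂ with h | h
          · exact absurd h (hnotuv t w₁ z₁ ht₁).2
          · rw [h] at ht₁
            rw [feq_vy y hyu, feq_lift w₁ z₁,
              hd2 s(w₁, z₁) (G'.mem_edgeSet.mpr hwz₁) (hlift_mem w₁ z₁ y'' ht₁)]
            exact hqd2.symm
        · rw [feq_lift w₁ z₁, feq_lift w₂ z₂]
          refine hc2' s(w₁, z₁) s(w₂, z₂) (G'.mem_edgeSet.mpr hwz₁)
            (G'.mem_edgeSet.mpr hwz₂) (fun h => hne ?_) ?_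
          · have h2 := congrArg (Sym2.map (Subtype.val : V'' → V)) h
            rwa [Sym2.map_pair_eq, Sym2.map_pair_eq] at h2
          · have htne := hnotuv t w₁ z₁ ht₁
            exact ⟨⟨t, htne.1, htne.2⟩, hlift_mem w₁ z₁ ⟨t, htne.1, htne.2⟩ ht₁,
              hlift_mem w₂ z₂ ⟨t, htne.1, htne.2⟩ ht₂⟩
      · -- condition 3
        intro t e he hte
        rcases hclass e he with rfl | rfl | rfl | ⟨w, z, hwz, rfl⟩
        · rw [feq_uv]
          rcases Sym2.mem_iff.mp hte with rfl | rfl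
          · rw [hfv_u]; exact hra.symm
          · rw [hfv_v]; exact hrb.symm
        · rw [feq_ux x hxv]
          rcases Sym2.mem_iff.mp hte with rfl | rfl
          · rw [hfv_u]; exact hpa.symm
          · rw [hfv_o x'']; exact hpc1.symm
        · rw [feq_vy y hyu]
          rcases Sym2.mem_iff.mp hte with rfl | rfl
          · rw [hfv_v]; exact hqb.symm
          · rw [hfv_o y'']; exact hqc2.symm
        · have htne := hnotuv t w z hte
          rw [feq_lift w z, hfv_o ⟨t, htne.1, htne.2⟩]
          exact hc3' ⟨t, htne.1, htne.2⟩ s(w, z) (G'.mem_edgeSet.mpr hwz)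
            (hlift_mem w z ⟨t, htne.1, htne.2⟩ hte)

/-- Every simple graph of maximum degree at most 2 admits a total 4-coloring. -/
theorem total_four_coloring_of_maxDegree_le_two {V : Type*} [Fintype V]
    (G : SimpleGraph V) [DecidableRel G.Adj] (h : G.maxDegree ≤ 2) :
    ∃ (fv : V → Fin 4) (fe : Sym2 V → Fin 4), IsTotalColoring G 4 fv fe := by
  obtain ⟨fv, fe, h1, h2, h3⟩ := aux (Fintype.card V) V G le_rfl
    (fun w => le_trans (G.degree_le_maxDegree w) h)
  exact ⟨fv, fe, h1, h2, h3⟩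
end

section
/- Let G be a graph with maximum degree Δ ≥ 2 such that G admits no total (Δ+2)-coloring, but every proper subgraph of G admits a total (Δ+2)-coloring. Then G has no vertex of degree 1. -/
lemma exists_color_notMem {n : ℕ} (S : Finset (Fin n)) (h : S.card < n) :
    ∃ c, c ∉ S := by
  by_contra h'
  push_neg at h'
  have hsub : (Finset.univ : Finset (Fin n)) ⊆ S := fun x _ => h' x
  have := Finset.card_le_card hsub
  simp [Finset.card_univ] at this
  omega

/-- If G has maximum degree Δ ≥ 2, admits no total (Δ+2)-coloring, and every
proper subgraph of G admits a total (Δ+2)-coloring, then G has no vertex of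
degree 1. -/
theorem no_degree_one_vertex_in_minimal_counterexample {V : Type*} [Fintype V]
    (G : SimpleGraph V) [DecidableRel G.Adj] (hΔ : 2 ≤ G.maxDegree)
    (hno : ¬ ∃ (fv : V → Fin (G.maxDegree + 2)) (fe : Sym2 V → Fin (G.maxDegree + 2)),
      IsTotalColoring G (G.maxDegree + 2) fv fe)
    (hsub : ∀ H : SimpleGraph V, H ≤ G → H ≠ G →
      ∃ (fv : V → Fin (G.maxDegree + 2)) (fe : Sym2 V → Fin (G.maxDegree + 2)),
        IsTotalColoring H (G.maxDegree + 2) fv fe) :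
    ∀ v : V, G.degree v ≠ 1 := by
  intro v hdeg
  classical
  have hcard : (G.neighborFinset v).card = 1 := hdeg
  obtain ⟨u, hu⟩ := Finset.card_eq_one.mp hcard
  have hadj : G.Adj v u := by
    have : u ∈ G.neighborFinset v := by simp [hu]
    simpa [SimpleGraph.mem_neighborFinset] using this
  have huniq : ∀ w, G.Adj v w → w = u := by
    intro w hw
    have : w ∈ G.neighborFinset v := by
      simpa [SimpleGraph.mem_neighborFinset] using hw
    simpa [hu] using this
  have hvu : v ≠ u := G.ne_of_adj hadj
  set e₀ : Sym2 V := s(v, u) with he₀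
  set H := G.deleteEdges {e₀} with hH
  have hHle : H ≤ G := SimpleGraph.deleteEdges_le _
  have hHne : H ≠ G := by
    intro h
    have h2 : H.Adj v u := h ▸ hadj
    simp [hH, SimpleGraph.deleteEdges_adj, he₀] at h2
  obtain ⟨fv, fe, hc1, hc2, hc3⟩ := hsub H hHle hHne
  -- any G-edge containing v is e₀
  have hveq : ∀ e ∈ G.edgeSet, v ∈ e → e = e₀ := by
    intro e he hve
    induction e with
    | _ a b =>
      have hab : G.Adj a b := he
      rcases Sym2.mem_iff.mp hve with rfl | rfl
      · have := huniq b hab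
        subst this; rfl
      · have := huniq a hab.symm
        subst this
        exact Sym2.eq_swap
  have hHedge : ∀ e, e ∈ H.edgeSet ↔ e ∈ G.edgeSet ∧ e ≠ e₀ := by
    intro e
    rw [hH, SimpleGraph.edgeSet_deleteEdges]
    simp
  have hHv : ∀ e ∈ H.edgeSet, v ∉ e := by
    intro e he hve
    rcases (hHedge e).mp he with ⟨heG, hne⟩
    exact hne (hveq e heG hve)
  -- forbidden colors for the new edge
  set S : Finset (Fin (G.maxDegree + 2)) :=
    insert (fv u) ((G.incidenceFinset u).image fe) with hS
  have hScard : S.card < G.maxDegree + 2 := by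
    have h1 : S.card ≤ ((G.incidenceFinset u).image fe).card + 1 :=
      Finset.card_insert_le _ _
    have h2 : ((G.incidenceFinset u).image fe).card ≤ (G.incidenceFinset u).card :=
      Finset.card_image_le
    have h3 : (G.incidenceFinset u).card = G.degree u :=
      G.card_incidenceFinset_eq_degree u
    have h4 : G.degree u ≤ G.maxDegree := G.degree_le_maxDegree u
    omega
  obtain ⟨ce, hce⟩ := exists_color_notMem S hScard
  have hce_u : ce ≠ fv u := by
    intro h; exact hce (by simp [hS, h])
  have hce_edge : ∀ e ∈ H.edgeSet, u ∈ e → ce ≠ fe e := by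
    intro e he hue h
    apply hce
    rw [hS, h]
    apply Finset.mem_insert_of_mem
    apply Finset.mem_image_of_mem
    rw [SimpleGraph.mem_incidenceFinset]
    exact ⟨(hHedge e).mp he |>.1, hue⟩
  -- forbidden colors for v
  obtain ⟨cv, hcv⟩ := exists_color_notMem {fv u, ce} (by
    have : ({fv u, ce} : Finset (Fin (G.maxDegree + 2))).card ≤ 2 :=
      Finset.card_le_two
    omega)
  have hcv_u : cv ≠ fv u := by intro h; exact hcv (by simp [h])
  have hcv_e : cv ≠ ce := by intro h; exact hcv (by simp [h])
  set fv' : V → Fin (G.maxDegree + 2) := Function.update fv v cv with hfv'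
  set fe' : Sym2 V → Fin (G.maxDegree + 2) := Function.update fe e₀ ce with hfe'
  have hfv'v : fv' v = cv := by simp [hfv']
  have hfv'x : ∀ x, x ≠ v → fv' x = fv x := by
    intro x hx; simp [hfv', Function.update_of_ne hx]
  have hfe'e₀ : fe' e₀ = ce := by simp [hfe']
  have hfe'e : ∀ e, e ≠ e₀ → fe' e = fe e := by
    intro e he; simp [hfe', Function.update_of_ne he]
  apply hno
  refine ⟨fv', fe', ?_, ?_, ?_⟩
  · intro x y hxy
    by_cases hx : x = v
    · subst hx
      rw [huniq y hxy, hfv'v, hfv'x u hvu.symm]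
      exact hcv_u
    · by_cases hy : y = v
      · subst hy
        rw [huniq x hxy.symm, hfv'v, hfv'x u hvu.symm]
        exact fun h => hcv_u h.symm
      · rw [hfv'x x hx, hfv'x y hy]
        apply hc1
        rw [hH, SimpleGraph.deleteEdges_adj]
        refine ⟨hxy, ?_⟩
        simp only [Set.mem_singleton_iff]
        intro h
        have : v ∈ s(x, y) := by rw [h, he₀]; simp
        rcases Sym2.mem_iff.mp this with h' | h'
        · exact hx h'.symm
        · exact hy h'.symm
  · intro e₁ e₂ he₁ he₂ hne ⟨w, hw₁, hw₂⟩
    by_cases h1 : e₁ = e₀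
    · subst h1
      have h2 : e₂ ≠ e₀ := fun h => hne h.symm
      have he₂H : e₂ ∈ H.edgeSet := (hHedge e₂).mpr ⟨he₂, h2⟩
      rw [hfe'e₀, hfe'e e₂ h2]
      have hwu : w = u := by
        rcases Sym2.mem_iff.mp (he₀ ▸ hw₁) with rfl | rfl
        · exact absurd hw₂ (hHv e₂ he₂H)
        · rfl
      exact hce_edge e₂ he₂H (hwu ▸ hw₂)
    · by_cases h2 : e₂ = e₀
      · subst h2
        have he₁H : e₁ ∈ H.edgeSet := (hHedge e₁).mpr ⟨he₁, h1⟩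
        rw [hfe'e₀, hfe'e e₁ h1]
        have hwu : w = u := by
          rcases Sym2.mem_iff.mp (he₀ ▸ hw₂) with rfl | rfl
          · exact absurd hw₁ (hHv e₁ he₁H)
          · rfl
        exact fun h => hce_edge e₁ he₁H (hwu ▸ hw₁) h.symm
      · rw [hfe'e e₁ h1, hfe'e e₂ h2]
        exact hc2 e₁ e₂ ((hHedge e₁).mpr ⟨he₁, h1⟩) ((hHedge e₂).mpr ⟨he₂, h2⟩)
          hne ⟨w, hw₁, hw₂⟩
  · intro x e he hxe
    by_cases h1 : e = e₀
    · subst h1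
      rw [hfe'e₀]
      rcases Sym2.mem_iff.mp (he₀ ▸ hxe) with rfl | rfl
      · rw [hfv'v]; exact hcv_e
      · rw [hfv'x x hvu.symm]; exact fun h => hce_u h.symm
    · have heH : e ∈ H.edgeSet := (hHedge e).mpr ⟨he, h1⟩
      rw [hfe'e e h1]
      have hx : x ≠ v := fun h => hHv e heH (h ▸ hxe)
      rw [hfv'x x hx]
      exact hc3 x e heH hxe
end
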